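/- arXiv:1003.1550 — 3 statements merged into one kernel-verified Lean document; each statement's English description precedes it below -/
import Mathlib

section
/- Suppose 𝕋ⁿ = [0, H)^{m×n}, where H ∈ ℝ ∪ {+∞} and H > 0 (each agent's type space is [0,H)^m). If f is an implementable, neutral, and anonymous social choice function, then f is the efficient social choice function: for every type profile t ∈ 𝕋ⁿ, f(t) ∈ argmax_{a ∈ A} Σ_{i ∈ N} t_i^a. -/
open Function

/-- A type profile: column `t a` is the utility vector in `ℝⁿ` for alternative `a`;
agent `i`'s type (row) is `fun a => t a i`. -/
abbrev Profile (n : ℕ) (A : Type*) := A → Fin n → ℝ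

/-- Payment rule `p` implements `f` in dominant strategies on the domain `Dom`:
no agent `i` can gain by a unilateral deviation (a change of his own row only). -/
def ImplementsOn {n : ℕ} {A : Type*} (Dom : Set (Profile n A)) (f : Profile n A → A)
    (p : Profile n A → Fin n → ℝ) : Prop :=
  ∀ t ∈ Dom, ∀ s ∈ Dom, ∀ i : Fin n,
    (∀ j : Fin n, j ≠ i → ∀ a : A, s a j = t a j) →
    t (f t) i + p t i ≥ t (f s) i + p s i

/-- `f` is implementable in dominant strategies on `Dom`. -/
def ImplementableOn {n : ℕ} {A : Type*} (Dom : Set (Profile n A))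
    (f : Profile n A → A) : Prop :=
  ∃ p, ImplementsOn Dom f p

/-- The choice set `C^f(t)`: alternatives `a` such that raising the column of `a`
by any strictly positive `ε` (staying inside the domain) makes `f` choose `a`. -/
def ChoiceSetOn {n : ℕ} {A : Type*} [DecidableEq A] (Dom : Set (Profile n A))
    (f : Profile n A → A) (t : Profile n A) : Set A :=
  {a | ∀ ε : Fin n → ℝ, (∀ i, 0 < ε i) →
    Function.update t a (t a + ε) ∈ Dom →
    f (Function.update t a (t a + ε)) = a}

/-- `f` is neutral: permuting the columns of a profile permutes the choice set
accordingly (the profile `s` induced by `ρ` has `s^{ρ a} = t^a`, i.e. `s b = t (ρ⁻¹ b)`). -/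
def NeutralOn {n : ℕ} {A : Type*} [DecidableEq A] (Dom : Set (Profile n A))
    (f : Profile n A → A) : Prop :=
  ∀ t ∈ Dom, ∀ ρ : Equiv.Perm A,
    ChoiceSetOn Dom f (fun b => t (ρ.symm b)) = ρ '' ChoiceSetOn Dom f t

/-- The `m`-dimensional open interval domain: agent `i`'s values all lie in the
open interval `(α i, β i)` (endpoints possibly infinite). -/
def IntervalDom (n : ℕ) (A : Type*) (α β : Fin n → EReal) : Set (Profile n A) :=
  {t | ∀ (a : A) (i : Fin n), α i < (t a i : EReal) ∧ (t a i : EReal) < β i}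

/-- The set `𝔻` of feasible utility vectors. -/
def DSet {n : ℕ} (α β : Fin n → EReal) : Set (Fin n → ℝ) :=
  {x | ∀ i : Fin n, α i < (x i : EReal) ∧ (x i : EReal) < β i}

/-- The strict relation `P^f` induced by `f` on utility vectors. -/
def PRel {n : ℕ} {A : Type*} [DecidableEq A] (Dom : Set (Profile n A))
    (f : Profile n A → A) (x y : Fin n → ℝ) : Prop :=
  ∃ t ∈ Dom, ∃ a b : A, a ≠ b ∧ t a = x ∧ t b = y ∧
    a ∈ ChoiceSetOn Dom f t ∧ b ∉ ChoiceSetOn Dom f t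

/-- The indifference relation `I^f` induced by `f` on utility vectors. -/
def IRel {n : ℕ} {A : Type*} [DecidableEq A] (Dom : Set (Profile n A))
    (f : Profile n A → A) (x y : Fin n → ℝ) : Prop :=
  ∃ t ∈ Dom, ∃ a b : A, a ≠ b ∧ t a = x ∧ t b = y ∧
    a ∈ ChoiceSetOn Dom f t ∧ b ∈ ChoiceSetOn Dom f t

/-- The induced social welfare relation `R^f`. -/
def RRel {n : ℕ} {A : Type*} [DecidableEq A] (Dom : Set (Profile n A))
    (f : Profile n A → A) (x y : Fin n → ℝ) : Prop :=
  PRel Dom f x y ∨ IRel Dom f x y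

/-- The half-open domain `[0, H)^{m×n}` (with `H` possibly `+∞`). -/
def HalfOpenDom (n : ℕ) (A : Type*) (H : EReal) : Set (Profile n A) :=
  {t | ∀ (a : A) (i : Fin n), 0 ≤ t a i ∧ (t a i : EReal) < H}

/-- `f` is anonymous on `Dom`: permuting the agents (rows) does not change the outcome. -/
def AnonymousOn {n : ℕ} {A : Type*} (Dom : Set (Profile n A))
    (f : Profile n A → A) : Prop :=
  ∀ t ∈ Dom, ∀ σ : Equiv.Perm (Fin n), f (fun a i => t a (σ i)) = f t


/-! Implementability yields Roberts' positive association of differences, and through it the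
social welfare relation `R^f` (`RRel`) on utility vectors: the column of the chosen alternative is
`R`-above every other column. Positive association and neutrality make `R` weakly Pareto, total,
invariant under upward translation and transitive up to arbitrarily small shifts; anonymity makes
it invariant under permutations of the agents.

Suppose `x R y` with `∑ x < ∑ y`. Cutting the segment from `x` to `y` into many pieces produces
such a pair with `x` and `y` close together. Then the translates of `x ∘ σ R y ∘ σ` over the `n`
cyclic shifts `σ` of the agents chain together; their differences add up to the constant vector
`∑ y - ∑ x`, so a vector ends up ranked above a pointwise larger one, contradicting Pareto. -/

open Function Filter Topology

lemma eventually_add_lt {a b : ℝ} (h : a < b) : ∀ᶠ ε in 𝓝 (0 : ℝ), a + ε < b :=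
  Tendsto.eventually_lt_const (by simpa using h) ((continuous_const.add continuous_id).tendsto 0)

lemma eventually_coe_add_lt {v : ℝ} {H : EReal} (h : (v : EReal) < H) :
    ∀ᶠ ε in 𝓝 (0 : ℝ), ((v + ε : ℝ) : EReal) < H :=
  Tendsto.eventually_lt_const (by simpa using h)
    ((continuous_coe_real_ereal.comp (continuous_const.add continuous_id)).tendsto 0)

lemma eventually_const_mul_lt (c : ℝ) {b : ℝ} (hb : 0 < b) : ∀ᶠ θ in 𝓝 (0 : ℝ), c * θ < b :=
  Tendsto.eventually_lt_const (by simpa using hb) ((continuous_const_mul c).tendsto 0)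

section Feasible

variable {n : ℕ} {H : EReal} {x y : Fin n → ℝ}

def Feasible (H : EReal) (x : Fin n → ℝ) : Prop := ∀ i, 0 ≤ x i ∧ (x i : EReal) < H

lemma feasible_of_le {U : ℝ} (h₀ : ∀ i, 0 ≤ x i) (hU : ∀ i, x i ≤ U) (hUH : (U : EReal) < H) :
    Feasible H x :=
  fun i => ⟨h₀ i, lt_of_le_of_lt (EReal.coe_le_coe_iff.2 (hU i)) hUH⟩

lemma Feasible.mono (hy : Feasible H y) (h₀ : ∀ i, 0 ≤ x i) (hxy : ∀ i, x i ≤ y i) :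
    Feasible H x :=
  fun i => ⟨h₀ i, lt_of_le_of_lt (EReal.coe_le_coe_iff.2 (hxy i)) (hy i).2⟩

lemma Feasible.add_const_of_le {c c' : ℝ} (hx : Feasible H x) (hc : 0 ≤ c) (hcc' : c ≤ c')
    (h : Feasible H (x + fun _ => c')) : Feasible H (x + fun _ => c) :=
  h.mono (fun i => add_nonneg (hx i).1 hc) fun i => by simpa using hcc'

lemma Feasible.zero (hx : Feasible H x) : Feasible H (0 : Fin n → ℝ) :=
  hx.mono (fun _ => le_rfl) fun i => (hx i).1

lemma Feasible.eventually_add (hx : Feasible H x) :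
    ∀ᶠ ε in 𝓝 (0 : ℝ), ∀ i, ((x i + ε : ℝ) : EReal) < H :=
  eventually_all.2 fun i => eventually_coe_add_lt (hx i).2

lemma update_mem_halfOpenDom {A : Type*} [DecidableEq A] {t : Profile n A}
    (ht : t ∈ HalfOpenDom n A H) (hx : Feasible H x) (a : A) :
    update t a x ∈ HalfOpenDom n A H := by
  intro c
  rcases eq_or_ne c a with rfl | hc
  · rw [update_self]
    exact hx
  · rw [update_of_ne hc]
    exact ht c

end Feasible

section Monotonicity

variable {n : ℕ} {A : Type*} {H : EReal} {f : Profile n A → A} {t s : Profile n A} {a : A}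

def StrictlyFavors (t s : Profile n A) (a : A) : Prop :=
  ∀ i, ∀ c, c ≠ a → s c i - t c i < s a i - t a i

def Favors (t s : Profile n A) (a : A) : Prop :=
  ∀ i, ∀ c, c ≠ a → s c i - t c i ≤ s a i - t a i

lemma StrictlyFavors.eventually [Finite A] (h : StrictlyFavors t s a) :
    ∀ᶠ ε in 𝓝 (0 : ℝ), ∀ i, ∀ c, c ≠ a → s c i - t c i + ε < s a i - t a i :=
  eventually_all.2 fun i => eventually_all.2 fun c =>
    eventually_imp_distrib_left.2 fun hc => eventually_add_lt (h i c hc)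

lemma ImplementsOn.apply_eq_of_deviation {Dom : Set (Profile n A)} {p : Profile n A → Fin n → ℝ}
    (hp : ImplementsOn Dom f p) (ht : t ∈ Dom) (hs : s ∈ Dom) (i : Fin n)
    (hrow : ∀ j, j ≠ i → ∀ c, s c j = t c j)
    (hgain : ∀ c, c ≠ f t → s c i - t c i < s (f t) i - t (f t) i) : f s = f t := by
  by_contra hne
  have hts := hp t ht s hs i hrow
  have hst := hp s hs t ht i fun j hj c => (hrow j hj c).symm
  linarith [hgain (f s) hne]

/-- Roberts' positive association of differences; the agents switch from `t` to `s` one at a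
time. -/
lemma ImplementableOn.apply_eq_of_strictlyFavors (hf : ImplementableOn (HalfOpenDom n A H) f)
    (ht : t ∈ HalfOpenDom n A H) (hs : s ∈ HalfOpenDom n A H) (h : StrictlyFavors t s (f t)) :
    f s = f t := by
  classical
  obtain ⟨p, hp⟩ := hf
  let hybrid (S : Finset (Fin n)) : Profile n A := fun c i => if i ∈ S then s c i else t c i
  have hybrid_mem (S) : hybrid S ∈ HalfOpenDom n A H := fun c i => by
    by_cases hi : i ∈ S <;> simp [hybrid, hi, hs c i, ht c i]
  suffices ∀ S, f (hybrid S) = f t by simpa [hybrid] using this Finset.univ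
  intro S
  induction S using Finset.induction_on with
  | empty => simp [hybrid]
  | insert j S hj ih =>
    rw [← ih]
    refine hp.apply_eq_of_deviation (hybrid_mem S) (hybrid_mem _) j
      (fun k hk c => by simp [hybrid, hk]) fun c hc => ?_
    rw [ih] at hc ⊢
    simpa [hybrid, hj] using h j c hc

end Monotonicity

section SocialWelfare

variable {n : ℕ} {A : Type*} [DecidableEq A] {H : EReal} {f : Profile n A → A}
  {t s : Profile n A} {x y z : Fin n → ℝ} {a b : A}

lemma ImplementableOn.apply_mem_choiceSetOn (hf : ImplementableOn (HalfOpenDom n A H) f)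
    (ht : t ∈ HalfOpenDom n A H) : f t ∈ ChoiceSetOn (HalfOpenDom n A H) f t := by
  intro ε hε hu
  refine hf.apply_eq_of_strictlyFavors ht hu fun i c hc => ?_
  simpa [hc] using hε i

lemma ImplementableOn.apply_eq_of_mem_choiceSetOn [Finite A]
    (hf : ImplementableOn (HalfOpenDom n A H) f) (ht : t ∈ HalfOpenDom n A H)
    (hs : s ∈ HalfOpenDom n A H) (ha : a ∈ ChoiceSetOn (HalfOpenDom n A H) f t)
    (h : StrictlyFavors t s a) : f s = a := by
  obtain ⟨ε, hε, hgap, hroom⟩ :=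
    (h.eventually.and (Feasible.eventually_add fun i => ht a i)).exists_gt
  have hu := update_mem_halfOpenDom ht (fun i => ⟨add_nonneg (ht a i).1 hε.le, hroom i⟩) a
  have hfu : f _ = a := ha _ (fun _ => hε) hu
  rw [← hfu]
  refine hf.apply_eq_of_strictlyFavors hu hs fun i c hc => ?_
  rw [hfu] at hc ⊢
  simpa [hc] using (by linarith [hgap i c hc] : s c i - t c i < s a i - (t a i + ε))

lemma ImplementableOn.mem_choiceSetOn_of_favors [Finite A]
    (hf : ImplementableOn (HalfOpenDom n A H) f) (ht : t ∈ HalfOpenDom n A H)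
    (ha : a ∈ ChoiceSetOn (HalfOpenDom n A H) f t) (h : Favors t s a) :
    a ∈ ChoiceSetOn (HalfOpenDom n A H) f s := by
  intro ε hε hu
  refine hf.apply_eq_of_mem_choiceSetOn ht hu ha fun i c hc => ?_
  simpa [hc] using (by linarith [h i c hc, hε i] : s c i - t c i < s a i + ε i - t a i)

/-- Raising `b` slightly at `s` would make `f` pick both `a` and `b`. -/
lemma ImplementableOn.not_strictlyFavors [Finite A] (hf : ImplementableOn (HalfOpenDom n A H) f)
    (ht : t ∈ HalfOpenDom n A H) (hs : s ∈ HalfOpenDom n A H)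
    (ha : a ∈ ChoiceSetOn (HalfOpenDom n A H) f t)
    (hb : b ∈ ChoiceSetOn (HalfOpenDom n A H) f s) (hab : a ≠ b) : ¬ StrictlyFavors t s a := by
  intro h
  obtain ⟨ε, hε, hgap, hroom⟩ :=
    (h.eventually.and (Feasible.eventually_add fun i => hs b i)).exists_gt
  have hu := update_mem_halfOpenDom hs (fun i => ⟨add_nonneg (hs b i).1 hε.le, hroom i⟩) b
  refine hab ((hf.apply_eq_of_mem_choiceSetOn ht hu ha fun i c hc => ?_).symm.trans
    (hb _ (fun _ => hε) hu))
  rcases eq_or_ne c b with rfl | hcb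
  · simpa [hab] using (by linarith [hgap i c hc] : s c i + ε - t c i < s a i - t a i)
  · simpa [hab, hcb] using (by linarith [hgap i c hc] : s c i - t c i < s a i - t a i)

lemma ImplementableOn.mem_choiceSetOn_const (hf : ImplementableOn (HalfOpenDom n A H) f)
    (hneu : NeutralOn (HalfOpenDom n A H) f) {w : Fin n → ℝ} (hw : Feasible H w) (a : A) :
    a ∈ ChoiceSetOn (HalfOpenDom n A H) f fun _ => w := by
  have hmem : (fun _ => w : Profile n A) ∈ HalfOpenDom n A H := fun _ => hw
  have := hneu _ hmem (Equiv.swap (f fun _ => w) a)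
  exact this ▸ ⟨_, hf.apply_mem_choiceSetOn hmem, Equiv.swap_apply_left _ _⟩

lemma AnonymousOn.mem_choiceSetOn_comp (hanon : AnonymousOn (HalfOpenDom n A H) f)
    (ha : a ∈ ChoiceSetOn (HalfOpenDom n A H) f t) (σ : Equiv.Perm (Fin n)) :
    a ∈ ChoiceSetOn (HalfOpenDom n A H) f fun c i => t c (σ i) := by
  intro ε hε hu
  have hperm : update (fun c i => t c (σ i)) a ((fun c i => t c (σ i)) a + ε) =
      fun c i => update t a (t a + ε ∘ σ.symm) c (σ i) := by
    funext c i
    rcases eq_or_ne c a with rfl | hca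
    · simp
    · simp [hca]
  rw [hperm] at hu ⊢
  have hu' : update t a (t a + ε ∘ σ.symm) ∈ HalfOpenDom n A H := fun c i => by
    simpa using hu c (σ.symm i)
  rw [hanon _ hu' σ]
  exact ha _ (fun i => hε _) hu'

lemma rRel_iff {Dom : Set (Profile n A)} :
    RRel Dom f x y ↔ ∃ t ∈ Dom, ∃ a b, a ≠ b ∧ t a = x ∧ t b = y ∧ a ∈ ChoiceSetOn Dom f t := by
  constructor
  · rintro (⟨t, ht, a, b, hab, hx, hy, ha, -⟩ | ⟨t, ht, a, b, hab, hx, hy, ha, -⟩) <;>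
      exact ⟨t, ht, a, b, hab, hx, hy, ha⟩
  · rintro ⟨t, ht, a, b, hab, hx, hy, ha⟩
    by_cases hb : b ∈ ChoiceSetOn Dom f t
    · exact .inr ⟨t, ht, a, b, hab, hx, hy, ha, hb⟩
    · exact .inl ⟨t, ht, a, b, hab, hx, hy, ha, hb⟩

lemma rRel_of_mem_choiceSetOn {Dom : Set (Profile n A)} (ht : t ∈ Dom) (hab : a ≠ b)
    (ha : a ∈ ChoiceSetOn Dom f t) : RRel Dom f (t a) (t b) :=
  rRel_iff.2 ⟨t, ht, a, b, hab, rfl, rfl, ha⟩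

lemma RRel.feasible_left (h : RRel (HalfOpenDom n A H) f x y) : Feasible H x := by
  obtain ⟨t, ht, a, -, -, rfl, -⟩ := rRel_iff.1 h
  exact ht a

lemma RRel.feasible_right (h : RRel (HalfOpenDom n A H) f x y) : Feasible H y := by
  obtain ⟨t, ht, -, b, -, -, rfl, -⟩ := rRel_iff.1 h
  exact ht b

lemma ImplementableOn.rRel_apply_of_ne (hf : ImplementableOn (HalfOpenDom n A H) f)
    (ht : t ∈ HalfOpenDom n A H) (hb : b ≠ f t) :
    RRel (HalfOpenDom n A H) f (t (f t)) (t b) :=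
  rRel_of_mem_choiceSetOn ht hb.symm (hf.apply_mem_choiceSetOn ht)

lemma Equiv.Perm.exists_apply_eq_and_apply_eq {a b a' b' : A} (hab : a ≠ b) (hab' : a' ≠ b') :
    ∃ ρ : Equiv.Perm A, ρ a = a' ∧ ρ b = b' := by
  have hb : Equiv.swap a a' b ≠ a' := fun h =>
    hab ((Equiv.swap a a').injective (h.trans (Equiv.swap_apply_left a a').symm)).symm
  refine ⟨(Equiv.swap a a').trans (Equiv.swap (Equiv.swap a a' b) b'), ?_, ?_⟩
  · simpa using Equiv.swap_apply_of_ne_of_ne hb.symm hab'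
  · simp

lemma update_update_zero_mem (hx : Feasible H x) (hy : Feasible H y) :
    update (update (0 : Profile n A) b y) a x ∈ HalfOpenDom n A H :=
  update_mem_halfOpenDom (update_mem_halfOpenDom (fun _ => hx.zero) hy b) hx a

/-- The other columns of a witness profile can be lowered to zero (`Favors`), and neutrality
moves its two alternatives to `a` and `b`. -/
lemma RRel.mem_choiceSetOn_update [Finite A] (hf : ImplementableOn (HalfOpenDom n A H) f)
    (hneu : NeutralOn (HalfOpenDom n A H) f) (h : RRel (HalfOpenDom n A H) f x y) (hab : a ≠ b) :
    a ∈ ChoiceSetOn (HalfOpenDom n A H) f (update (update 0 b y) a x) := by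
  obtain ⟨t, ht, a₀, b₀, hab₀, rfl, rfl, ha₀⟩ := rRel_iff.1 h
  set s : Profile n A := update (update 0 b₀ (t b₀)) a₀ (t a₀)
  have hs : s ∈ HalfOpenDom n A H := update_update_zero_mem (ht a₀) (ht b₀)
  have hs₀ : a₀ ∈ ChoiceSetOn (HalfOpenDom n A H) f s := by
    refine hf.mem_choiceSetOn_of_favors ht ha₀ fun i c hca => ?_
    rcases eq_or_ne c b₀ with rfl | hcb
    · simp [s, hca]
    · simpa [s, hca, hcb] using (ht c i).1
  obtain ⟨ρ, rfl, rfl⟩ := Equiv.Perm.exists_apply_eq_and_apply_eq hab₀ hab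
  have hρ : (fun c => s (ρ.symm c)) =
      update (update (0 : Profile n A) (ρ b₀) (t b₀)) (ρ a₀) (t a₀) := by
    funext c
    simp only [s, update_apply, Pi.zero_apply, Equiv.symm_apply_eq]
  exact hρ ▸ hneu s hs ρ ▸ Set.mem_image_of_mem ρ hs₀

lemma not_rRel_of_lt [Finite A] (hf : ImplementableOn (HalfOpenDom n A H) f)
    (hneu : NeutralOn (HalfOpenDom n A H) f) (hlt : ∀ i, x i < y i) :
    ¬ RRel (HalfOpenDom n A H) f x y := by
  intro h
  obtain ⟨-, -, a, b, hab, -⟩ := rRel_iff.1 h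
  have hx := h.feasible_left
  have hy := h.feasible_right
  refine hf.not_strictlyFavors (fun _ => hy) (update_update_zero_mem hx hy)
    (hf.mem_choiceSetOn_const hneu hy b) (h.mem_choiceSetOn_update hf hneu hab) hab.symm
    fun i c hcb => ?_
  rcases eq_or_ne c a with rfl | hca
  · simpa [hcb.symm] using hlt i
  · simpa [hca, hcb, hab.symm] using (hx i).1.trans_lt (hlt i)

lemma RRel.not_rRel_add [Finite A] (hf : ImplementableOn (HalfOpenDom n A H) f)
    (hneu : NeutralOn (HalfOpenDom n A H) f) (h : RRel (HalfOpenDom n A H) f x y) {c : ℝ}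
    (hc : 0 < c) : ¬ RRel (HalfOpenDom n A H) f y (x + fun _ => c) := by
  intro h'
  obtain ⟨-, -, a, b, hab, -⟩ := rRel_iff.1 h
  have hb := h'.mem_choiceSetOn_update hf hneu hab.symm
  rw [update_comm hab] at hb
  refine hf.not_strictlyFavors (update_update_zero_mem h.feasible_left h.feasible_right)
    (update_update_zero_mem h'.feasible_right h'.feasible_left)
    (h.mem_choiceSetOn_update hf hneu hab) hb hab fun i e hea => ?_
  rcases eq_or_ne e b with rfl | heb
  · simpa [hea] using hc
  · simpa [hea, heb] using hc

lemma ImplementableOn.rRel_total [Nontrivial A] (hf : ImplementableOn (HalfOpenDom n A H) f)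
    (hx : Feasible H x) (hy : Feasible H y) :
    RRel (HalfOpenDom n A H) f x y ∨ RRel (HalfOpenDom n A H) f y x := by
  obtain ⟨a, b, hab⟩ := exists_pair_ne A
  set t : Profile n A := update (fun _ => y) a x
  have ht : t ∈ HalfOpenDom n A H := update_mem_halfOpenDom (fun _ => hy) hx a
  by_cases hfa : f t = a
  · have := hf.rRel_apply_of_ne ht (hfa ▸ hab.symm)
    exact .inl (by simpa [t, hfa, hab.symm] using this)
  · have := hf.rRel_apply_of_ne ht (Ne.symm hfa)
    exact .inr (by simpa [t, hfa] using this)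

lemma ImplementableOn.rRel_max_of_three [Fintype A] (hf : ImplementableOn (HalfOpenDom n A H) f)
    (hA : 3 ≤ Fintype.card A) (hx : Feasible H x) (hy : Feasible H y) (hz : Feasible H z) :
    RRel (HalfOpenDom n A H) f x y ∧ RRel (HalfOpenDom n A H) f x z ∨
      RRel (HalfOpenDom n A H) f y x ∧ RRel (HalfOpenDom n A H) f y z ∨
      RRel (HalfOpenDom n A H) f z x ∧ RRel (HalfOpenDom n A H) f z y := by
  obtain ⟨a, b, c, hab, hac, hbc⟩ := Fintype.two_lt_card_iff.1 hA
  set t : Profile n A := update (update (fun _ => z) b y) a x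
  have ht : t ∈ HalfOpenDom n A H :=
    update_mem_halfOpenDom (update_mem_halfOpenDom (fun _ => hz) hy b) hx a
  have hR {e : A} (he : e ≠ f t) := hf.rRel_apply_of_ne ht he
  by_cases hfa : f t = a
  · rw [hfa] at hR
    refine .inl ⟨?_, ?_⟩
    · simpa [t, hab.symm] using hR hab.symm
    · simpa [t, hac.symm, hbc.symm] using hR hac.symm
  by_cases hfb : f t = b
  · rw [hfb] at hR
    refine .inr (.inl ⟨?_, ?_⟩)
    · simpa [t, hab.symm] using hR hab
    · simpa [t, hab.symm, hac.symm, hbc.symm] using hR hbc.symm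
  · refine .inr (.inr ⟨?_, ?_⟩)
    · simpa [t, hfa, hfb] using hR (Ne.symm hfa)
    · simpa [t, hfa, hfb, hab.symm] using hR (Ne.symm hfb)

lemma RRel.add_right [Finite A] (hf : ImplementableOn (HalfOpenDom n A H) f)
    (h : RRel (HalfOpenDom n A H) f x y) (hz : ∀ i, 0 ≤ z i) (hxz : Feasible H (x + z))
    (hyz : Feasible H (y + z)) : RRel (HalfOpenDom n A H) f (x + z) (y + z) := by
  obtain ⟨t, ht, a, b, hab, rfl, rfl, ha⟩ := rRel_iff.1 h
  set s : Profile n A := update (update t b (t b + z)) a (t a + z)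
  have hs : s ∈ HalfOpenDom n A H :=
    update_mem_halfOpenDom (update_mem_halfOpenDom ht hyz b) hxz a
  have hsa : a ∈ ChoiceSetOn (HalfOpenDom n A H) f s := by
    refine hf.mem_choiceSetOn_of_favors ht ha fun i c hca => ?_
    rcases eq_or_ne c b with rfl | hcb
    · simp [s, hca]
    · simpa [s, hca, hcb] using hz i
  simpa [s, hab.symm] using rRel_of_mem_choiceSetOn hs hab hsa

lemma RRel.comp_perm (hanon : AnonymousOn (HalfOpenDom n A H) f)
    (h : RRel (HalfOpenDom n A H) f x y) (σ : Equiv.Perm (Fin n)) :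
    RRel (HalfOpenDom n A H) f (x ∘ σ) (y ∘ σ) := by
  obtain ⟨t, ht, a, b, hab, rfl, rfl, ha⟩ := rRel_iff.1 h
  exact rRel_of_mem_choiceSetOn (t := fun c i => t c (σ i)) (fun c i => ht c (σ i)) hab
    (hanon.mem_choiceSetOn_comp ha σ)

/-- After shifting `x R y` up by `c / 2`, neither `y + c / 2` nor `z` can be `R`-above both
others (`RRel.not_rRel_add`), so `x + c` is. -/
lemma ImplementableOn.rRel_trans_add [Fintype A] (hf : ImplementableOn (HalfOpenDom n A H) f)
    (hneu : NeutralOn (HalfOpenDom n A H) f) (hA : 3 ≤ Fintype.card A)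
    (hxy : RRel (HalfOpenDom n A H) f x y) (hyz : RRel (HalfOpenDom n A H) f y z) {c : ℝ}
    (hc : 0 < c) (hxc : Feasible H (x + fun _ => c)) (hyc : Feasible H (y + fun _ => c)) :
    RRel (HalfOpenDom n A H) f (x + fun _ => c) z := by
  have hc₂ := half_pos hc
  have hyc₂ := hxy.feasible_right.add_const_of_le hc₂.le (half_le_self hc.le) hyc
  have hshift := hxy.add_right hf (fun _ => hc₂.le)
    (hxy.feasible_left.add_const_of_le hc₂.le (half_le_self hc.le) hxc) hyc₂
  have hhalves : (x + fun _ => c / 2) + (fun _ => c / 2) = x + fun _ => c := by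
    ext i
    simp [add_assoc]
  have hx_top : ¬ RRel (HalfOpenDom n A H) f (y + fun _ => c / 2) (x + fun _ => c) :=
    hhalves ▸ hshift.not_rRel_add hf hneu hc₂
  have hz_top := hyz.not_rRel_add hf hneu hc₂
  rcases hf.rRel_max_of_three hA hxc hyc₂ hyz.feasible_right with ⟨-, h⟩ | ⟨h, -⟩ | ⟨-, h⟩
  · exact h
  · exact absurd h hx_top
  · exact absurd h hz_top

end SocialWelfare

section Efficiency

open Finset

variable {n : ℕ} {A : Type*} [DecidableEq A] [Fintype A] {H : EReal} {f : Profile n A → A}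
  {x y : Fin n → ℝ}

lemma abs_sum_le_card_mul {ι : Type*} [Fintype ι] {g : ι → ℝ} {δ : ℝ} (hg : ∀ k, |g k| ≤ δ)
    (s : Finset ι) : |∑ k ∈ s, g k| ≤ Fintype.card ι * δ := by
  rcases isEmpty_or_nonempty ι with hι | ⟨⟨k₀⟩⟩
  · simp [s.eq_empty_of_isEmpty]
  calc |∑ k ∈ s, g k| ≤ ∑ k ∈ s, |g k| := abs_sum_le_sum_abs _ _
    _ ≤ #s • δ := sum_le_card_nsmul _ _ _ fun k _ => hg k
    _ ≤ Fintype.card ι * δ := by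
      rw [nsmul_eq_mul]
      gcongr
      · exact (abs_nonneg _).trans (hg k₀)
      · exact card_le_univ s

lemma Feasible.exists_bound [Nonempty (Fin n)] (hx : Feasible H x) (hy : Feasible H y) :
    ∃ L, (∀ i, x i ≤ L ∧ y i ≤ L) ∧ (L : EReal) < H := by
  obtain ⟨i₀, hi₀⟩ := Finite.exists_max fun i => max (x i) (y i)
  refine ⟨max (x i₀) (y i₀), fun i => max_le_iff.1 (hi₀ i), ?_⟩
  rcases max_choice (x i₀) (y i₀) with h | h <;> rw [h]
  exacts [(hx i₀).2, (hy i₀).2]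

lemma RRel.rRel_add_comp_perm (hf : ImplementableOn (HalfOpenDom n A H) f)
    (hanon : AnonymousOn (HalfOpenDom n A H) f) (h : RRel (HalfOpenDom n A H) f x y)
    (σ : Equiv.Perm (Fin n)) {v : Fin n → ℝ} (hxv : ∀ i, x (σ i) ≤ v i) (hv : Feasible H v)
    (hv' : Feasible H (v + (y - x) ∘ σ)) : RRel (HalfOpenDom n A H) f v (v + (y - x) ∘ σ) := by
  have e₁ : x ∘ σ + (v - x ∘ σ) = v := add_sub_cancel _ _
  have e₂ : y ∘ σ + (v - x ∘ σ) = v + (y - x) ∘ σ := by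
    ext
    simp
    ring
  have := (h.comp_perm hanon σ).add_right hf (z := v - x ∘ σ) (fun i => sub_nonneg.2 (hxv i))
    (by rwa [e₁]) (by rwa [e₂])
  rwa [e₁, e₂] at this

lemma ImplementableOn.rRel_add_card_mul_of_chain {ι : Type*} [DecidableEq ι] [Fintype ι]
    (hf : ImplementableOn (HalfOpenDom n A H) f) (hneu : NeutralOn (HalfOpenDom n A H) f)
    (hA : 3 ≤ Fintype.card A) {v : Finset ι → Fin n → ℝ}
    (hlink : ∀ s k, k ∉ s → RRel (HalfOpenDom n A H) f (v s) (v (insert k s))) {θ : ℝ}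
    (hθ : 0 < θ) (hvθ : ∀ s, Feasible H (v s + fun _ => θ))
    (hroom : Feasible H (v ∅ + fun _ => Fintype.card ι * θ)) (s : Finset ι) :
    ∀ k ∉ s, RRel (HalfOpenDom n A H) f (v ∅ + fun _ => #s * θ) (v (insert k s)) := by
  induction s using Finset.induction_on with
  | empty =>
    intro k hk
    convert hlink ∅ k hk using 1
    ext
    simp
  | insert a s ha ih =>
    intro k hk
    have hcard : (#s : ℝ) + 1 ≤ Fintype.card ι := by
      exact_mod_cast (card_lt_univ_of_notMem ha : #s < Fintype.card ι)
    have hshift :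
        (v ∅ + fun _ => #s * θ) + (fun _ => θ) = v ∅ + fun _ => #(insert a s) * θ := by
      ext
      simp [card_insert_of_notMem ha]
      ring
    have hv₀ := (hlink ∅ a (notMem_empty a)).feasible_left
    have hroom' : Feasible H ((v ∅ + fun _ => #s * θ) + fun _ => θ) := by
      rw [hshift]
      refine hv₀.add_const_of_le (by positivity) ?_ hroom
      rw [card_insert_of_notMem ha]
      push_cast
      gcongr
    exact hshift ▸ hf.rRel_trans_add hneu hA (ih a ha) (hlink _ k hk) hθ hroom' (hvθ _)

lemma ImplementableOn.exists_rRel_succ_or_rRel_add_mul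
    (hf : ImplementableOn (HalfOpenDom n A H) f) (hneu : NeutralOn (HalfOpenDom n A H) f)
    (hA : 3 ≤ Fintype.card A) {w : ℕ → Fin n → ℝ} {N : ℕ} {θ : ℝ} (hθ : 0 < θ) (h₀ : RRel (HalfOpenDom n A H) f x (w 0))
    (hw : ∀ k ≤ N, Feasible H (w k)) (hwθ : ∀ k ≤ N, Feasible H (w k + fun _ => θ))
    (hxθ : Feasible H (x + fun _ => N * θ)) :
    ∀ j ≤ N, (∃ k < j, RRel (HalfOpenDom n A H) f (w (k + 1)) (w k)) ∨
      RRel (HalfOpenDom n A H) f (x + fun _ => j * θ) (w j) := by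
  have : Nontrivial A := Fintype.one_lt_card_iff_nontrivial.1 (by omega)
  intro j
  induction j with
  | zero => exact fun _ => .inr (by convert h₀; ext; simp)
  | succ j ih =>
    intro hj
    rcases ih (by omega) with ⟨k, hk, hup⟩ | hj_rel
    · exact .inl ⟨k, by omega, hup⟩
    rcases hf.rRel_total (hw (j + 1) hj) (hw j (by omega)) with hup | hdown
    · exact .inl ⟨j, by omega, hup⟩
    have hshift : (x + fun _ => j * θ) + (fun _ => θ) = x + fun _ => (j + 1 : ℕ) * θ := by
      ext
      simp
      ring
    have hxθ' : Feasible H ((x + fun _ => j * θ) + fun _ => θ) := by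
      rw [hshift]
      exact h₀.feasible_left.add_const_of_le (by positivity) (by gcongr) hxθ
    exact .inr (hshift ▸ hf.rRel_trans_add hneu hA hj_rel hdown hθ hxθ' (hwθ j (by omega)))

/-- Cut the segment from `y` down to `x` into `N` pieces `w k`: either two consecutive pieces are
ranked upwards, or the descent from `x R w 0` reaches `x + (N - 1) θ R w (N - 1)`. -/
lemma RRel.exists_rRel_fraction (hf : ImplementableOn (HalfOpenDom n A H) f)
    (hneu : NeutralOn (HalfOpenDom n A H) f) (hA : 3 ≤ Fintype.card A)
    (h : RRel (HalfOpenDom n A H) f x y) {L : ℝ} (hL : ∀ i, x i ≤ L ∧ y i ≤ L) {N : ℕ}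
    (hN : 0 < N) {θ : ℝ} (hθ : 0 < θ) (hroom : ((L + N * θ : ℝ) : EReal) < H) :
    ∃ u e, 0 ≤ e ∧ e ≤ N * θ ∧ (∀ i, u i ≤ L + e) ∧
      RRel (HalfOpenDom n A H) f u (fun i => u i + (y i - x i) / N - e) := by
  have hNR : (0 : ℝ) < N := by exact_mod_cast hN
  have hθN : θ ≤ N * θ := le_mul_of_one_le_left hθ.le (by exact_mod_cast hN)
  have hx := h.feasible_left
  have hy := h.feasible_right
  set w : ℕ → Fin n → ℝ := fun k i => y i - k / N * (y i - x i)
  have hw_mem (k : ℕ) (hk : k ≤ N) (i : Fin n) : 0 ≤ w k i ∧ w k i ≤ L := by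
    have hr₀ : (0 : ℝ) ≤ k / N := by positivity
    have hr₁ : (k : ℝ) / N ≤ 1 := div_le_one_of_le₀ (by exact_mod_cast hk) hNR.le
    constructor <;> nlinarith [(hx i).1, (hy i).1, hL i]
  have hwθ (k : ℕ) (hk : k ≤ N) : Feasible H (w k + fun _ => θ) :=
    feasible_of_le (fun i => by simp; linarith [(hw_mem k hk i).1])
      (fun i => by simp; linarith [(hw_mem k hk i).2]) hroom
  have hw (k : ℕ) (hk : k ≤ N) : Feasible H (w k) :=
    (hwθ k hk).mono (fun i => (hw_mem k hk i).1) fun i => by simp [hθ.le]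
  have hxθ : Feasible H (x + fun _ => N * θ) :=
    feasible_of_le (fun i => by simp; nlinarith [(hx i).1]) (fun i => by simp; linarith [hL i])
      hroom
  rcases hf.exists_rRel_succ_or_rRel_add_mul hneu hA hθ (by simpa [w] using h) hw hwθ hxθ
    (N - 1) (by omega) with ⟨k, hk, hup⟩ | hlast
  · refine ⟨w (k + 1), 0, le_rfl, by positivity,
      fun i => by simpa using (hw_mem (k + 1) (by omega) i).2, ?_⟩
    convert hup using 1
    ext i
    simp [w]
    field_simp
    ring
  · refine ⟨x + fun _ => (N - 1 : ℕ) * θ, (N - 1 : ℕ) * θ, by positivity, ?_,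
      fun i => by simpa using (hL i).1, ?_⟩
    · gcongr
      omega
    · convert hlast using 1
      ext i
      simp [w, Nat.cast_sub hN]
      field_simp
      ring

/-- Chain the translates `v s R v (insert k s)` of `x ∘ σ R y ∘ σ`, `σ = (· + k)`, over all cyclic
shifts: their differences add up to the constant `∑ y - ∑ x`, so a constant vector ends up ranked
above a strictly larger one. The headroom keeps the whole chain inside the domain. -/
lemma RRel.sum_le_of_close (hf : ImplementableOn (HalfOpenDom n A H) f)
    (hneu : NeutralOn (HalfOpenDom n A H) f) (hanon : AnonymousOn (HalfOpenDom n A H) f)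
    (hA : 3 ≤ Fintype.card A) (h : RRel (HalfOpenDom n A H) f x y) {L δ : ℝ}
    (hδ : ∀ i, |y i - x i| ≤ δ) (hL : ∀ i, x i ≤ L)
    (hroom : ((L + (2 * n + 1) * δ : ℝ) : EReal) < H) : ∑ i, y i ≤ ∑ i, x i := by
  by_contra! hsum
  have : NeZero n := ⟨by rintro rfl; simp at hsum⟩
  have hn : (0 : ℝ) < n := by exact_mod_cast Nat.pos_of_neZero n
  set d : Fin n → ℝ := y - x
  set G := ∑ i, d i
  have hG : 0 < G := by simpa [G, d, sum_sub_distrib] using hsum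
  have hcyc (i : Fin n) : ∑ k, d (i + k) = G := Equiv.sum_comp (Equiv.addLeft i) d
  have hδ₀ : 0 ≤ δ := (abs_nonneg _).trans (hδ 0)
  have hpartial (s : Finset (Fin n)) (i : Fin n) : |∑ k ∈ s, d (i + k)| ≤ n * δ := by
    simpa using abs_sum_le_card_mul (g := fun k => d (i + k)) (fun k => hδ (i + k)) s
  set θ := G / n
  have hθ : 0 < θ := div_pos hG hn
  have hθδ : θ ≤ δ := by
    rw [div_le_iff₀ hn, mul_comm]
    exact hcyc 0 ▸ (le_abs_self _).trans (hpartial univ 0)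
  have hL₀ : 0 ≤ L := (h.feasible_left 0).1.trans (hL 0)
  set v : Finset (Fin n) → Fin n → ℝ := fun s i => L + n * δ + ∑ k ∈ s, d (i + k)
  have hv_ge (s i) : L ≤ v s i := by linarith [(abs_le.1 (hpartial s i)).1]
  have hv_le (s i) : v s i ≤ L + 2 * n * δ := by linarith [(abs_le.1 (hpartial s i)).2]
  have hvθ (s) : Feasible H (v s + fun _ => θ) :=
    feasible_of_le (fun i => by simp; linarith [hv_ge s i])
      (fun i => by simp; linarith [hv_le s i]) hroom
  have hv (s) : Feasible H (v s) :=
    (hvθ s).mono (fun i => hL₀.trans (hv_ge s i)) fun i => by simp [hθ.le]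
  have hlink (s : Finset (Fin n)) (k) (hk : k ∉ s) :
      RRel (HalfOpenDom n A H) f (v s) (v (insert k s)) := by
    have hinsert : v (insert k s) = v s + (y - x) ∘ Equiv.addRight k := by
      ext i
      simp [v, d, sum_insert hk]
      ring
    have hv' := hv (insert k s)
    rw [hinsert] at hv' ⊢
    exact h.rRel_add_comp_perm hf hanon _ (fun i => (hL _).trans (hv_ge s i)) (hv s) hv'
  have hroom' : Feasible H (v ∅ + fun _ => Fintype.card (Fin n) * θ) :=
    feasible_of_le (fun i => by simp; positivity) (fun i => by simp [v]; nlinarith) hroom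
  have hend := hf.rRel_add_card_mul_of_chain hneu hA hlink hθ hvθ hroom' (univ.erase 0) 0
    (notMem_erase 0 _)
  rw [insert_erase (mem_univ 0)] at hend
  refine not_rRel_of_lt hf hneu (fun i => ?_) hend
  have : (#(univ.erase (0 : Fin n)) : ℝ) * θ < n * θ := by
    gcongr
    simpa using card_erase_lt_of_mem (mem_univ (0 : Fin n))
  simp only [v, hcyc, Pi.add_apply, sum_empty]
  rw [mul_div_cancel₀ _ hn.ne'] at this
  linarith

lemma RRel.sum_le (hf : ImplementableOn (HalfOpenDom n A H) f)
    (hneu : NeutralOn (HalfOpenDom n A H) f) (hanon : AnonymousOn (HalfOpenDom n A H) f)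
    (hA : 3 ≤ Fintype.card A) (h : RRel (HalfOpenDom n A H) f x y) : ∑ i, y i ≤ ∑ i, x i := by
  by_contra! hsum
  have : Nonempty (Fin n) := ⟨⟨0, Nat.pos_of_ne_zero (by rintro rfl; simp at hsum)⟩⟩
  have hx := h.feasible_left
  have hy := h.feasible_right
  obtain ⟨L, hL, hLH⟩ := hx.exists_bound hy
  have hL₀ : 0 ≤ L := (hx _).1.trans (hL (Classical.arbitrary _)).1
  obtain ⟨ρ, hρ, hLρ⟩ := (eventually_coe_add_lt hLH).exists_gt
  -- `N` makes the pieces `(y - x) / N` small against the headroom `ρ`.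
  obtain ⟨N, hN⟩ := exists_nat_gt (2 * (2 * n + 1) * L / ρ)
  have hNR : (0 : ℝ) < N := (by positivity : 0 ≤ 2 * (2 * n + 1) * L / ρ).trans_lt hN
  have hLN : (2 * n + 1) * (L / N) < ρ / 2 := by
    rw [div_lt_iff₀ hρ] at hN
    rw [mul_div_assoc', div_lt_iff₀ hNR]
    linarith
  have hG : 0 < (∑ i, y i - ∑ i, x i) / N := div_pos (by linarith) hNR
  -- `θ` bounds the error `e ≤ N θ` of `exists_rRel_fraction` against the headroom and the gain.
  obtain ⟨θ, hθ, hθρ, hθG⟩ := ((eventually_const_mul_lt ((2 * n + 2) * N) (half_pos hρ)).and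
    (eventually_const_mul_lt (n * N) hG)).exists_gt
  obtain ⟨u, e, he₀, he, hu, hR⟩ := h.exists_rRel_fraction hf hneu hA hL
    (by exact_mod_cast hNR) hθ (lt_of_le_of_lt (EReal.coe_le_coe_iff.2 (by nlinarith)) hLρ)
  refine absurd (hR.sum_le_of_close hf hneu hanon hA (L := L + e) (δ := L / N + e) (fun i => ?_)
    hu ?_) ?_
  · have hd : |y i - x i| / N ≤ L / N := by
      gcongr
      exact abs_sub_le_of_nonneg_of_le (hy i).1 (hL i).2 (hx i).1 (hL i).1
    calc |u i + (y i - x i) / N - e - u i| = |(y i - x i) / N - e| := by ring_nf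
      _ ≤ |(y i - x i) / N| + |e| := abs_sub _ _
      _ ≤ L / N + e := by rw [abs_div, abs_of_pos hNR, abs_of_nonneg he₀]; linarith
  · exact lt_of_le_of_lt (EReal.coe_le_coe_iff.2 (by nlinarith)) hLρ
  · have : (n : ℝ) * e < (∑ i, y i - ∑ i, x i) / N := by nlinarith
    simp only [sum_sub_distrib, sum_add_distrib, ← sum_div, sum_const, card_univ,
      Fintype.card_fin, nsmul_eq_mul]
    linarith

end Efficiency

theorem implementable_neutral_anonymous_efficient_general
    {n : ℕ} {A : Type*} [Fintype A] [DecidableEq A]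
    (hA : 3 ≤ Fintype.card A)
    (H : EReal)
    (f : Profile n A → A)
    (hf : ImplementableOn (HalfOpenDom n A H) f)
    (hneu : NeutralOn (HalfOpenDom n A H) f)
    (hanon : AnonymousOn (HalfOpenDom n A H) f) :
    ∀ t ∈ HalfOpenDom n A H, ∀ b : A, ∑ i, t b i ≤ ∑ i, t (f t) i := by
  intro t ht b
  rcases eq_or_ne b (f t) with rfl | hb
  · exact le_rfl
  · exact (hf.rRel_apply_of_ne ht hb).sum_le hf hneu hanon hA

/-- on `𝕋ⁿ = [0,H)^{m×n}`, every implementable, neutral and anonymous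
social choice function is the efficient one: `f t` maximizes `∑ i, t a i` over `a`. -/
theorem implementable_neutral_anonymous_efficient
    {n : ℕ} {A : Type*} [Fintype A] [DecidableEq A]
    (hn : 0 < n) (hA : 3 ≤ Fintype.card A)
    (H : EReal) (hH : 0 < H)
    (f : Profile n A → A)
    (hf : ImplementableOn (HalfOpenDom n A H) f)
    (hneu : NeutralOn (HalfOpenDom n A H) f)
    (hanon : AnonymousOn (HalfOpenDom n A H) f) :
    ∀ t ∈ HalfOpenDom n A H, ∀ b : A, ∑ i, t b i ≤ ∑ i, t (f t) i :=
  implementable_neutral_anonymous_efficient_general hA H f hf hneu hanon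
end

section
/- Suppose 𝕋ⁿ = ℝ^{m×n}, f is implementable and satisfies non-imposition. Let t be a type profile such that C^f(t) = {a} for some a ∈ A. Then there exists ε ∈ ℝⁿ with ε ≫ 0 such that a ∈ C^f(s), where s is the profile with s^a = t^a − ε and s^b = t^b for all b ≠ a. -/
open Function

/-- Payment rule `p` implements `f` in dominant strategies:
no agent `i` can gain by a unilateral deviation (a change of his own row only). -/
def Implements {n : ℕ} {A : Type*} (f : Profile n A → A)
    (p : Profile n A → Fin n → ℝ) : Prop :=
  ∀ t s : Profile n A, ∀ i : Fin n,
    (∀ j : Fin n, j ≠ i → ∀ a : A, s a j = t a j) →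
    t (f t) i + p t i ≥ t (f s) i + p s i

/-- `f` is implementable in dominant strategies. -/
def Implementable {n : ℕ} {A : Type*} (f : Profile n A → A) : Prop :=
  ∃ p, Implements f p

/-- The choice set `C^f(t)`: alternatives `a` such that raising the column of `a`
by any strictly positive `ε` makes `f` choose `a`. -/
def ChoiceSet {n : ℕ} {A : Type*} [DecidableEq A]
    (f : Profile n A → A) (t : Profile n A) : Set A :=
  {a | ∀ ε : Fin n → ℝ, (∀ i, 0 < ε i) →
    f (Function.update t a (t a + ε)) = a}

/-- `f` is neutral: permuting the columns of a profile permutes the choice set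
accordingly (the profile `s` induced by `ρ` has `s^{ρ a} = t^a`, i.e. `s b = t (ρ⁻¹ b)`). -/
def Neutral {n : ℕ} {A : Type*} [DecidableEq A] (f : Profile n A → A) : Prop :=
  ∀ t : Profile n A, ∀ ρ : Equiv.Perm A,
    ChoiceSet f (fun b => t (ρ.symm b)) = ρ '' ChoiceSet f t

/-- `f` satisfies non-imposition: every alternative is chosen at some profile. -/
def NonImposition {n : ℕ} {A : Type*} (f : Profile n A → A) : Prop :=
  ∀ a : A, ∃ t : Profile n A, f t = a

/-- The `P`-set of the pair `(a,b)`. -/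
def RPSet {n : ℕ} {A : Type*} [DecidableEq A] (f : Profile n A → A) (a b : A) :
    Set (Fin n → ℝ) :=
  {α | ∃ t : Profile n A, a ∈ ChoiceSet f t ∧ t a - t b = α}

/-- The profile `1^a_ε`: column `a` equals the constant vector `ε·𝟙`, all other columns are `0`. -/
def OneProf {n : ℕ} {A : Type*} [DecidableEq A] (a : A) (ε : ℝ) : Profile n A :=
  fun b => if b = a then (fun _ => ε) else 0

/-!
Implementability gives monotonicity: if `f t = a` and `s` raises every difference `sᵃ - sᵇ`
strictly above `tᵃ - tᵇ`, then `f s = a` (change one agent at a time and add the two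
incentive constraints). Consequently `f t ∈ C^f(t)`, and membership in the choice set already
forces the choice at every strictly more favourable profile. If the theorem failed, then for
arbitrarily small `r > 0` some `b ≠ a` would be chosen at a profile whose column `a` is lowered by
less than `r`; as `A` is finite, one `b` occurs for arbitrarily small `r`, and monotonicity then
puts `b` into `C^f(t) = {a}`.
-/

open Filter Topology

def MoreFavorable {n : ℕ} {A : Type*} (a : A) (t s : Profile n A) : Prop :=
  ∀ i, ∀ b ≠ a, t a i - t b i < s a i - s b i

lemma moreFavorable_update_add {n : ℕ} {A : Type*} [DecidableEq A] {t : Profile n A} {a : A}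
    {ε : Fin n → ℝ} (hε : ∀ i, 0 < ε i) : MoreFavorable a t (update t a (t a + ε)) := by
  intro i b hb
  simp only [update_self, update_of_ne hb, Pi.add_apply]
  linarith [hε i]

namespace Implements

variable {n : ℕ} {A : Type*} {f : Profile n A → A} {p : Profile n A → Fin n → ℝ}

lemma apply_eq_of_sub_lt_at (hfp : Implements f p) {t s : Profile n A} {i : Fin n} {a : A}
    (hrow : ∀ j ≠ i, ∀ b, s b j = t b j) (hgap : ∀ b ≠ a, t a i - t b i < s a i - s b i)
    (hft : f t = a) : f s = a := by
  by_contra hb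
  have hts := hfp t s i hrow
  have hst := hfp s t i fun j hj b => (hrow j hj b).symm
  have := hgap (f s) hb
  rw [hft] at hts hst
  linarith

lemma apply_eq_of_moreFavorable (hfp : Implements f p) {t s : Profile n A} {a : A}
    (hft : f t = a) (hts : MoreFavorable a t s) : f s = a := by
  classical
  suffices ∀ S : Finset (Fin n), f (fun b i => if i ∈ S then s b i else t b i) = a by
    simpa using this Finset.univ
  intro S
  induction S using Finset.induction_on with
  | empty => simpa using hft
  | insert j S hj ih =>
    refine hfp.apply_eq_of_sub_lt_at (i := j) (fun k hk b => ?_) (fun b hb => ?_) ih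
    · simp [hk]
    · simpa [hj] using hts j b hb

lemma apply_mem_choiceSet [DecidableEq A] (hfp : Implements f p) (t : Profile n A) :
    f t ∈ ChoiceSet f t :=
  fun _ hε => hfp.apply_eq_of_moreFavorable rfl (moreFavorable_update_add hε)

lemma apply_eq_of_mem_choiceSet [Finite A] [DecidableEq A] (hfp : Implements f p)
    {t s : Profile n A} {a : A} (ha : a ∈ ChoiceSet f t) (hts : MoreFavorable a t s) :
    f s = a := by
  have hsmall : ∀ᶠ x in 𝓝[>] (0 : ℝ),
      0 < x ∧ ∀ i, ∀ b ≠ a, x < s a i - s b i - (t a i - t b i) := by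
    refine (eventually_mem_nhdsWithin (a := 0)).and
      (eventually_nhdsWithin_of_eventually_nhds ?_)
    refine eventually_all.2 fun i => eventually_all.2 fun b => ?_
    by_cases hb : b = a
    · simp [hb]
    · filter_upwards [eventually_lt_nhds (sub_pos.2 (hts i b hb))] with x hx using fun _ => hx
  obtain ⟨x, hx, hxgap⟩ := hsmall.exists
  refine hfp.apply_eq_of_moreFavorable (ha (fun _ => x) fun _ => hx) fun i b hb => ?_
  simp only [update_self, update_of_ne hb, Pi.add_apply]
  linarith [hxgap i b hb]

lemma mem_choiceSet_of_frequently [Finite A] [DecidableEq A] (hfp : Implements f p)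
    {t : Profile n A} {a b : A} (hba : b ≠ a)
    (hb : ∃ᶠ r in 𝓝[>] (0 : ℝ), ∃ δ : Fin n → ℝ, (∀ i, 0 < δ i) ∧
      f (update t a (t a - (fun _ => r) + δ)) = b) :
    b ∈ ChoiceSet f t := by
  intro η hη
  have hr : ∀ᶠ r in 𝓝[>] (0 : ℝ), ∀ i, r < η i :=
    eventually_nhdsWithin_of_eventually_nhds (eventually_all.2 fun i => eventually_lt_nhds (hη i))
  obtain ⟨r, hrη, δ, hδ, hfb⟩ := (hr.and_frequently hb).exists
  refine hfp.apply_eq_of_mem_choiceSet (hfb ▸ hfp.apply_mem_choiceSet _) fun i c hc => ?_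
  by_cases hca : c = a
  · subst hca
    simp only [update_self, update_of_ne hba, update_of_ne hc, Pi.add_apply, Pi.sub_apply]
    linarith [hrη i, hδ i]
  · simp only [update_self, update_of_ne hba, update_of_ne hc, update_of_ne hca, Pi.add_apply]
    linarith [hη i]

end Implements

theorem singleton_choiceSet_lower_general
    {n : ℕ} {A : Type*} [Fintype A] [DecidableEq A]
    (f : Profile n A → A)
    (hf : Implementable f)
    (t : Profile n A) (a : A) (ht : ChoiceSet f t = {a}) :
    ∃ ε : Fin n → ℝ, (∀ i, 0 < ε i) ∧
      a ∈ ChoiceSet f (Function.update t a (t a - ε)) := by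
  obtain ⟨p, hfp⟩ := hf
  by_contra! hlower
  have hdeviate : ∀ᶠ r in 𝓝[>] (0 : ℝ), ∃ b, b ≠ a ∧ ∃ δ : Fin n → ℝ, (∀ i, 0 < δ i) ∧
      f (update t a (t a - (fun _ => r) + δ)) = b := by
    filter_upwards [eventually_mem_nhdsWithin] with r hr
    obtain ⟨δ, hδ, hne⟩ : ∃ δ : Fin n → ℝ, (∀ i, 0 < δ i) ∧
        f (update t a (t a - (fun _ => r) + δ)) ≠ a := by
      simpa [ChoiceSet] using hlower (fun _ => r) fun _ => hr
    exact ⟨_, hne, δ, hδ, rfl⟩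
  obtain ⟨b, hb⟩ := frequently_exists.1 hdeviate.frequently
  obtain ⟨-, hba, -⟩ := hb.exists
  have hbC := hfp.mem_choiceSet_of_frequently hba (hb.mono fun _ => And.right)
  exact hba (by rwa [ht] at hbC)

/-- if `C^f(t) = {a}`, then for some `ε ≫ 0`, `a` remains in the
choice set after lowering the column of `a` by `ε`. -/
theorem singleton_choiceSet_lower
    {n : ℕ} {A : Type*} [Fintype A] [DecidableEq A]
    (hn : 0 < n) (hA : 3 ≤ Fintype.card A)
    (f : Profile n A → A)
    (hf : Implementable f) (hni : NonImposition f)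
    (t : Profile n A) (a : A) (ht : ChoiceSet f t = {a}) :
    ∃ ε : Fin n → ℝ, (∀ i, 0 < ε i) ∧
      a ∈ ChoiceSet f (Function.update t a (t a - ε)) :=
  singleton_choiceSet_lower_general f hf t a ht
end

section
/- Suppose 𝕋ⁿ = ℝ^{m×n}, f is implementable and satisfies non-imposition. For ε ∈ ℝ and a ∈ A, let 1^a_ε denote the type profile whose column for a equals ε·𝟙 (the vector with every entry ε) and whose other columns are the zero vector. Then for every a ∈ A with a ∉ C^f(0) (0 the all-zero profile), there exists a unique κ(a) ∈ ℝ with κ(a) > 0 such that C^f(1^a_{κ(a)}) = C^f(0) ∪ {a}; moreover κ(a) = inf{ε ∈ ℝ, ε ≥ 0 : a ∈ C^f(1^a_ε)}. -/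
/-!
Implementability gives weak monotonicity agent by agent, hence: if `a` is chosen at `u`
(or merely lies in `C^f(u)`), it stays chosen whenever every agent's advantage of `a` over
every other alternative strictly increases. Along the ray `ε ↦ 1^a_ε` the set of `ε` with
`a ∈ C^f(1^a_ε)` is therefore an up-set, nonempty by non-imposition, and closed, so it is
`[κ, ∞)`, with `κ > 0` because `1^a_0 = 0` and `a ∉ C^f(0)`. Below `κ` the alternatives of
`C^f(0)` stay in the choice set: raising such a `b` must make `f` pick `b`, since picking `a`
would put `a` into the choice set and picking a third alternative `d` contradicts
`b ∈ C^f(0)` at a profile favouring both `b` and `d`. Closedness carries this to `κ` itself,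
and beyond `κ` no `b ≠ a` can survive next to `a`, which gives uniqueness.
-/

open Function

theorem exists_pos_forall_lt {ι : Type*} [Finite ι] {g : ι → ℝ} (hg : ∀ j, 0 < g j) :
    ∃ η, 0 < η ∧ ∀ j, η < g j := by
  have : ∀ᶠ η in nhdsWithin (0 : ℝ) (Set.Ioi 0), ∀ j, η < g j :=
    Filter.eventually_all.2 fun j => nhdsWithin_le_nhds (eventually_lt_nhds (hg j))
  exact (eventually_mem_nhdsWithin.and this).exists

section Implements

variable {n : ℕ} {A : Type*} {f : Profile n A → A} {p : Profile n A → Fin n → ℝ}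

theorem Implements.weak_monotone (hp : Implements f p) {u w : Profile n A} {i : Fin n}
    (h : ∀ j ≠ i, ∀ c, u c j = w c j) :
    w (f u) i - w (f w) i ≤ u (f u) i - u (f w) i := by
  have h₁ := hp u w i fun j hj c => (h j hj c).symm
  have h₂ := hp w u i h
  linarith

theorem Implements.apply_eq_of_agree_of_lt (hp : Implements f p) {u w : Profile n A}
    {i : Fin n} {a : A} (h : ∀ j ≠ i, ∀ c, u c j = w c j) (hu : f u = a)
    (hlt : ∀ c ≠ a, u a i - u c i < w a i - w c i) : f w = a := by
  by_contra hw
  have := hp.weak_monotone h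
  rw [hu] at this
  linarith [hlt (f w) hw]

theorem Implements.apply_eq_of_lt (hp : Implements f p) {u w : Profile n A} {a : A}
    (hu : f u = a) (hlt : ∀ i, ∀ c ≠ a, u a i - u c i < w a i - w c i) : f w = a := by
  classical
  let mix (E : Finset (Fin n)) : Profile n A := fun c i => if i ∈ E then w c i else u c i
  have hmix : ∀ E, f (mix E) = a := by
    intro E
    induction E using Finset.induction_on with
    | empty => simpa [mix] using hu
    | insert i E hiE ih =>
      refine hp.apply_eq_of_agree_of_lt (i := i) (fun j hj c => ?_) ih fun c hc => ?_
      · simp [mix, hj]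
      · simpa [mix, hiE] using hlt i c hc
  simpa [mix] using hmix Finset.univ

variable [DecidableEq A]

theorem Implements.apply_mem_choiceSet_s18 (hp : Implements f p) (u : Profile n A) :
    f u ∈ ChoiceSet f u := fun ε hε =>
  hp.apply_eq_of_lt rfl fun i c hc => by simp [update_of_ne hc, hε i]

variable [Finite A]

theorem Implements.apply_eq_of_mem_choiceSet_s18 (hp : Implements f p) {u w : Profile n A} {a : A}
    (ha : a ∈ ChoiceSet f u) (hlt : ∀ i, ∀ c ≠ a, u a i - u c i < w a i - w c i) :
    f w = a := by
  obtain ⟨η, hη, hηlt⟩ := exists_pos_forall_lt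
    (g := fun x : Fin n × {c // c ≠ a} => (w a x.1 - w x.2 x.1) - (u a x.1 - u x.2 x.1))
    fun x => sub_pos.2 (hlt _ _ x.2.2)
  refine hp.apply_eq_of_lt (ha (fun _ => η) fun _ => hη) fun i c hc => ?_
  have := hηlt (i, ⟨c, hc⟩)
  simp only [update_self, update_of_ne hc, Pi.add_apply]
  linarith

theorem Implements.mem_choiceSet_of_le (hp : Implements f p) {u w : Profile n A} {a : A}
    (ha : a ∈ ChoiceSet f u) (hle : ∀ i, ∀ c ≠ a, u a i - u c i ≤ w a i - w c i) :
    a ∈ ChoiceSet f w := fun δ hδ =>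
  hp.apply_eq_of_mem_choiceSet_s18 ha fun i c hc => by
    simp only [update_self, update_of_ne hc, Pi.add_apply]
    linarith [hle i c hc, hδ i]

theorem Implements.mem_choiceSet_of_forall_pos (hp : Implements f p) {t : Profile n A} {a : A}
    (h : ∀ η > 0, ∃ u, a ∈ ChoiceSet f u ∧ ∀ i, ∀ c ≠ a, u a i - u c i ≤ t a i - t c i + η) :
    a ∈ ChoiceSet f t := by
  intro δ hδ
  obtain ⟨η, hη, hηδ⟩ := exists_pos_forall_lt hδ
  obtain ⟨u, hu, hle⟩ := h η hη
  exact hp.apply_eq_of_mem_choiceSet_s18 hu fun i c hc => by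
    simp only [update_self, update_of_ne hc, Pi.add_apply]
    linarith [hle i c hc, hηδ i]

end Implements

section OneProf

variable {n : ℕ} {A : Type*} [DecidableEq A] {a b : A} {ε : ℝ}

@[simp]
theorem oneProf_apply_self (i : Fin n) : OneProf a ε a i = ε := by simp [OneProf]

@[simp]
theorem oneProf_apply_of_ne (h : b ≠ a) (i : Fin n) : OneProf a ε b i = 0 := by
  simp [OneProf, h]

theorem oneProf_zero : OneProf (n := n) a 0 = 0 := by
  funext b i
  by_cases h : b = a <;> simp [OneProf, h]

variable [Finite A] {f : Profile n A → A} {p : Profile n A → Fin n → ℝ} {ε' k : ℝ}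

theorem Implements.exists_mem_choiceSet_oneProf (hp : Implements f p) (hni : NonImposition f)
    (a : A) : ∃ M, 0 ≤ M ∧ a ∈ ChoiceSet f (OneProf a M) := by
  obtain ⟨t, ht⟩ := hni a
  obtain ⟨M, hM⟩ := Finite.exists_le fun x : Fin n × A => t a x.1 - t x.2 x.1
  refine ⟨max M 0, le_max_right _ _,
    hp.mem_choiceSet_of_le (ht ▸ hp.apply_mem_choiceSet_s18 t) fun i c hc => ?_⟩
  rw [oneProf_apply_self, oneProf_apply_of_ne hc, sub_zero]
  exact (hM (i, c)).trans (le_max_left _ _)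

theorem Implements.mem_choiceSet_oneProf_mono (hp : Implements f p)
    (ha : a ∈ ChoiceSet f (OneProf a ε)) (hεε' : ε ≤ ε') : a ∈ ChoiceSet f (OneProf a ε') :=
  hp.mem_choiceSet_of_le ha fun i c hc => by simpa [hc] using hεε'

theorem Implements.mem_choiceSet_oneProf_of_forall_gt (hp : Implements f p)
    (h : ∀ ε, k < ε → a ∈ ChoiceSet f (OneProf a ε)) : a ∈ ChoiceSet f (OneProf a k) :=
  hp.mem_choiceSet_of_forall_pos fun η hη =>
    ⟨_, h (k + η) (by linarith), fun i c hc => by simp [hc]⟩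

theorem Implements.mem_choiceSet_oneProf_of_forall_lt (hp : Implements f p) (hba : b ≠ a)
    (hk : 0 < k) (h : ∀ ε, 0 ≤ ε → ε < k → b ∈ ChoiceSet f (OneProf a ε)) :
    b ∈ ChoiceSet f (OneProf a k) := by
  refine hp.mem_choiceSet_of_forall_pos fun η hη =>
    ⟨_, h (max (k - η) 0) (le_max_right _ _) (max_lt (by linarith) hk), fun i c hc => ?_⟩
  simp only [oneProf_apply_of_ne hba, zero_sub]
  by_cases hca : c = a
  · simp only [hca, oneProf_apply_self]
    linarith [le_max_left (k - η) 0]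
  · simp only [oneProf_apply_of_ne hca]
    linarith

theorem Implements.mem_choiceSet_zero_of_mem_choiceSet_oneProf (hp : Implements f p)
    (hba : b ≠ a) (hε : 0 ≤ ε) (hb : b ∈ ChoiceSet f (OneProf a ε)) :
    b ∈ ChoiceSet f (0 : Profile n A) :=
  hp.mem_choiceSet_of_le hb fun i c hc => by by_cases hca : c = a <;> simp [hba, hca, hε]

theorem Implements.le_of_mem_choiceSet_oneProf (hp : Implements f p) (hba : b ≠ a)
    (hb : b ∈ ChoiceSet f (OneProf a ε)) (ha : a ∈ ChoiceSet f (OneProf a ε')) : ε ≤ ε' := by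
  by_contra! h
  have hδ : 0 < (ε - ε') / 2 := by linarith
  refine hba ((hb _ fun _ => hδ).symm.trans (hp.apply_eq_of_mem_choiceSet_s18 ha fun i c hc => ?_))
  simp only [oneProf_apply_self, oneProf_apply_of_ne hc, update_of_ne hba.symm]
  by_cases hcb : c = b
  · simp only [hcb, update_self, Pi.add_apply, oneProf_apply_of_ne hba]
    linarith
  · simp only [update_of_ne hcb, oneProf_apply_of_ne hc]
    linarith

theorem Implements.mem_choiceSet_oneProf_of_notMem (hp : Implements f p)
    (hb : b ∈ ChoiceSet f (0 : Profile n A)) (hba : b ≠ a) (hε : 0 ≤ ε)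
    (ha : a ∉ ChoiceSet f (OneProf a ε)) : b ∈ ChoiceSet f (OneProf a ε) := by
  intro δ hδ
  set w := update (OneProf a ε) b (OneProf a ε b + δ)
  have hwa : ∀ i, w a i = ε := by simp [w, update_of_ne hba.symm]
  have hwb : ∀ i, w b i = δ i := by simp [w, hba]
  have hwc : ∀ c ≠ a, c ≠ b → ∀ i, w c i = 0 := by simp +contextual [w, update_of_ne]
  by_contra hd
  obtain hda | hda := eq_or_ne (f w) a
  · refine ha (hp.mem_choiceSet_of_le (hda ▸ hp.apply_mem_choiceSet_s18 w) fun i c hc => ?_)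
    rw [hwa, oneProf_apply_self, oneProf_apply_of_ne hc]
    by_cases hcb : c = b
    · rw [hcb, hwb]
      linarith [hδ i]
    · rw [hwc c hc hcb]
  · -- `b` and the winner `d` both gain at `v`, so both would have to win there
    set d := f w
    have hdb : d ≠ b := hd
    let v : Profile n A := fun c i => if c = b then δ i / 2 else if c = d then δ i / 4 else 0
    have hvb : ∀ i, v b i = δ i / 2 := by simp [v]
    have hvd : ∀ i, v d i = δ i / 4 := by simp [v, hdb]
    have hvc : ∀ c ≠ b, c ≠ d → ∀ i, v c i = 0 := by simp +contextual [v]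
    have hd_wins : f v = d := hp.apply_eq_of_lt rfl fun i c hc => by
      rw [hwc d hda hdb, hvd]
      have := hδ i
      by_cases hcb : c = b
      · rw [hcb, hwb, hvb]
        linarith
      · rw [hvc c hcb hc]
        by_cases hca : c = a
        · rw [hca, hwa]
          linarith
        · rw [hwc c hca hcb]
          linarith
    have hb_wins : f v = b := hp.apply_eq_of_mem_choiceSet_s18 hb fun i c hc => by
      have := hδ i
      simp only [Pi.zero_apply, sub_self, hvb]
      by_cases hcd : c = d
      · rw [hcd, hvd]
        linarith
      · rw [hvc c hc hcd]
        linarith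
    exact hdb (hd_wins.symm.trans hb_wins)

end OneProf

theorem kappa_exists_unique_general
    {n : ℕ} {A : Type*} [Fintype A] [DecidableEq A]
    (f : Profile n A → A)
    (hf : Implementable f) (hni : NonImposition f)
    (a : A) (ha : a ∉ ChoiceSet f (0 : Profile n A)) :
    ∃ k : ℝ, (0 < k ∧
        ChoiceSet f (OneProf a k) = ChoiceSet f (0 : Profile n A) ∪ {a}) ∧
      (∀ k' : ℝ, 0 < k' →
        ChoiceSet f (OneProf a k') = ChoiceSet f (0 : Profile n A) ∪ {a} → k' = k) ∧
      k = sInf {ε : ℝ | 0 ≤ ε ∧ a ∈ ChoiceSet f (OneProf a ε)} := by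
  obtain ⟨p, hp⟩ := hf
  set S := {ε : ℝ | 0 ≤ ε ∧ a ∈ ChoiceSet f (OneProf a ε)}
  have hSne : S.Nonempty := hp.exists_mem_choiceSet_oneProf hni a
  have hSbdd : BddBelow S := ⟨0, fun _ h => h.1⟩
  have hgt : ∀ ε, sInf S < ε → a ∈ ChoiceSet f (OneProf a ε) := fun ε hε =>
    let ⟨x, hxS, hxε⟩ := exists_lt_of_csInf_lt hSne hε
    hp.mem_choiceSet_oneProf_mono hxS.2 hxε.le
  have hlt : ∀ ε, 0 ≤ ε → ε < sInf S → a ∉ ChoiceSet f (OneProf a ε) := fun ε hε h hεa =>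
    (csInf_le hSbdd ⟨hε, hεa⟩).not_gt h
  have haS : a ∈ ChoiceSet f (OneProf a (sInf S)) := hp.mem_choiceSet_oneProf_of_forall_gt hgt
  have hS0 : 0 < sInf S := (le_csInf hSne fun _ h => h.1).lt_of_ne fun h => ha (by
    rwa [← h, oneProf_zero] at haS)
  refine ⟨sInf S, ⟨hS0, subset_antisymm (fun b hb => ?_) (Set.union_subset (fun b hb => ?_)
    (Set.singleton_subset_iff.2 haS))⟩, fun k hk hkC => ?_, rfl⟩
  · obtain rfl | hba := eq_or_ne b a
    · exact Or.inr rfl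
    · exact Or.inl (hp.mem_choiceSet_zero_of_mem_choiceSet_oneProf hba hS0.le hb)
  · have hba : b ≠ a := fun h => ha (h ▸ hb)
    exact hp.mem_choiceSet_oneProf_of_forall_lt hba hS0 fun ε hε hεS =>
      hp.mem_choiceSet_oneProf_of_notMem hb hba hε (hlt ε hε hεS)
  · have hak : a ∈ ChoiceSet f (OneProf a k) := hkC ▸ Or.inr rfl
    have hf0 : f 0 ∈ ChoiceSet f (OneProf a k) := hkC ▸ Or.inl (hp.apply_mem_choiceSet_s18 0)
    have hf0a : f 0 ≠ a := fun h => ha (h ▸ hp.apply_mem_choiceSet_s18 0)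
    exact le_antisymm (le_of_forall_gt_imp_ge_of_dense fun ε hε =>
      hp.le_of_mem_choiceSet_oneProf hf0a hf0 (hgt ε hε)) (csInf_le hSbdd ⟨hk.le, hak⟩)

/-- for each `a ∉ C^f(0)` there is a unique `k > 0` with
`C^f(1^a_k) = C^f(0) ∪ {a}`; moreover `k = inf {ε ≥ 0 : a ∈ C^f(1^a_ε)}`. -/
theorem kappa_exists_unique
    {n : ℕ} {A : Type*} [Fintype A] [DecidableEq A]
    (hn : 0 < n) (hA : 3 ≤ Fintype.card A)
    (f : Profile n A → A)
    (hf : Implementable f) (hni : NonImposition f)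
    (a : A) (ha : a ∉ ChoiceSet f (0 : Profile n A)) :
    ∃ k : ℝ, (0 < k ∧
        ChoiceSet f (OneProf a k) = ChoiceSet f (0 : Profile n A) ∪ {a}) ∧
      (∀ k' : ℝ, 0 < k' →
        ChoiceSet f (OneProf a k') = ChoiceSet f (0 : Profile n A) ∪ {a} → k' = k) ∧
      k = sInf {ε : ℝ | 0 ≤ ε ∧ a ∈ ChoiceSet f (OneProf a ε)} :=
  kappa_exists_unique_general f hf hni a ha
end
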